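/- arXiv:math/0105238 — 2 statements merged into one kernel-verified Lean document; each statement's English description precedes it below -/
import Mathlib

section
/- Let G be an abelian group, H₁, ..., Hₙ subgroups, and a₁, ..., aₙ, b ∈ G with K ≤ G a subgroup. If b + K ⊆ ⋃_{i=1}^n (a_i + H_i), then K ⊆ ⋃_{i=1}^n c_i + (K ∩ H_i) for suitable c_i ∈ K (taking empty cosets where (b+K) ∩ (a_i+H_i) = ∅), i.e., K is covered by finitely many cosets of the subgroups K ∩ H_i. -/
open Pointwise

/-- If a coset `b + K` is covered by a finite union of cosets `aᵢ + Hᵢ`, then the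
subgroup `K` is covered by finitely many cosets `cᵢ + (K ∩ Hᵢ)` with `cᵢ ∈ K`. -/
theorem coset_cover_to_subgroup_cover {G : Type*} [AddCommGroup G]
    (n : ℕ) (a : Fin n → G) (H : Fin n → AddSubgroup G) (b : G) (K : AddSubgroup G)
    (hcov : (b +ᵥ (K : Set G)) ⊆ ⋃ i, a i +ᵥ (H i : Set G)) :
    ∃ c : Fin n → G, (∀ i, c i ∈ K) ∧
      (K : Set G) ⊆ ⋃ i, c i +ᵥ ((K ⊓ H i : AddSubgroup G) : Set G) := by
  classical
  set P : Fin n → Prop := fun i => ∃ k, k ∈ K ∧ b + k ∈ a i +ᵥ (H i : Set G) with hP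
  choose! c hcK hcH using fun i (h : P i) => h
  refine ⟨fun i => if h : P i then c i else 0, fun i => ?_, fun x hx => ?_⟩
  · by_cases h : P i
    · simpa [h] using hcK i h
    · simp only [h, dif_neg, not_false_iff]; exact K.zero_mem
  · have hbx : b + x ∈ ⋃ i, a i +ᵥ (H i : Set G) := hcov ⟨x, hx, rfl⟩
    obtain ⟨_, ⟨i, rfl⟩, hi⟩ := hbx
    have hPi : P i := ⟨x, hx, hi⟩
    refine Set.mem_iUnion.2 ⟨i, ?_⟩
    refine ⟨x - c i, ?_, by simp [hPi]⟩
    constructor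
    · exact K.sub_mem hx (hcK i hPi)
    · obtain ⟨h1, hh1, he1⟩ := hi
      obtain ⟨h2, hh2, he2⟩ := hcH i hPi
      have hx2 : x - c i = h1 - h2 := by
        have e1 : a i + h1 = b + x := he1
        have e2 : a i + h2 = b + c i := he2
        have e3 : (a i + h1) - (a i + h2) = (b + x) - (b + c i) := by rw [e1, e2]
        simp only [add_sub_add_left_eq_sub] at e3
        exact e3.symm
      rw [hx2]
      exact (H i).sub_mem hh1 hh2
end

section
/- Let G be an abelian group and let S be a subgroup of G that equals a finite union of cosets ⋃ᵢ (aᵢ + Hᵢ) of subgroups Hᵢ of G. Then S contains some H_i of finite index in S, and S is the union of finitely many cosets of H_i ∩ S. -/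
open Pointwise

/-- If a subgroup `S` of an abelian group equals a finite union of cosets
`⋃ᵢ (aᵢ + Hᵢ)`, then some `Hᵢ ∩ S` has finite index in `S`, and `S` is a finite
union of cosets of that `Hᵢ ∩ S`. -/
theorem subgroup_eq_finUnion_cosets {G : Type*} [AddCommGroup G]
    (S : AddSubgroup G) (n : ℕ) (a : Fin n → G) (H : Fin n → AddSubgroup G)
    (hS : (S : Set G) = ⋃ i, a i +ᵥ (H i : Set G)) :
    ∃ i, ((H i ⊓ S).addSubgroupOf S).FiniteIndex ∧
      ∃ (m : ℕ) (c : Fin m → G),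
        (S : Set G) = ⋃ j, c j +ᵥ ((H i ⊓ S : AddSubgroup G) : Set G) := by
  classical
  -- indices whose coset meets S
  set ι := {i : Fin n // ((a i +ᵥ (H i : Set G)) ∩ S).Nonempty}
  have hb : ∀ i : ι, ∃ b : S, (b : G) ∈ a i.1 +ᵥ (H i.1 : Set G) := by
    rintro ⟨i, x, hx1, hx2⟩
    exact ⟨⟨x, hx2⟩, hx1⟩
  choose b hbmem using hb
  -- the cosets b i +ᵥ (H i ⊓ S).addSubgroupOf S cover S
  have hcov : ⋃ i ∈ (Finset.univ : Finset ι),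
      (b i) +ᵥ (((H i.1 ⊓ S).addSubgroupOf S : AddSubgroup S) : Set S) = Set.univ := by
    ext s
    simp only [Set.mem_iUnion, Finset.mem_univ, Set.mem_univ, iff_true, true_and]
    have hsS : (s : G) ∈ (S : Set G) := s.2
    rw [hS, Set.mem_iUnion] at hsS
    obtain ⟨i, hi⟩ := hsS
    have hne : ((a i +ᵥ (H i : Set G)) ∩ S).Nonempty := ⟨s, hi, s.2⟩
    refine ⟨⟨i, hne⟩, ?_⟩
    rw [Set.mem_vadd_set_iff_neg_vadd_mem]
    have h1 : (s : G) - a i ∈ H i := by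
      rw [Set.mem_vadd_set_iff_neg_vadd_mem] at hi
      simpa [sub_eq_neg_add] using hi
    have h2 : (b ⟨i, hne⟩ : G) - a i ∈ H i := by
      have := hbmem ⟨i, hne⟩
      rw [Set.mem_vadd_set_iff_neg_vadd_mem] at this
      simpa [sub_eq_neg_add] using this
    have : (s : G) - (b ⟨i, hne⟩ : G) ∈ H i := by
      have := (H i).sub_mem h1 h2
      simpa using this
    simp only [AddSubgroup.mem_addSubgroupOf, SetLike.mem_coe, vadd_eq_add,
      AddSubgroup.coe_add, AddSubgroup.coe_neg, AddSubgroup.mem_inf]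
    constructor
    · exact ⟨by simpa [sub_eq_neg_add, add_comm] using this,
        S.add_mem (S.neg_mem (b ⟨i, hne⟩).2) s.2⟩
    · trivial
  obtain ⟨k, -, hk⟩ := AddSubgroup.exists_finiteIndex_of_leftCoset_cover hcov
  refine ⟨k.1, hk, ?_⟩
  -- now cover S by cosets of H k ⊓ S using quotient representatives
  set K := (H k.1 ⊓ S).addSubgroupOf S with hK
  have : Fintype (S ⧸ K) := K.fintypeQuotientOfFiniteIndex
  obtain ⟨m, e⟩ : ∃ m : ℕ, Nonempty (Fin m ≃ (S ⧸ K)) :=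
    ⟨Fintype.card (S ⧸ K), ⟨Fintype.equivFin _ |>.symm⟩⟩
  obtain ⟨e⟩ := e
  refine ⟨m, fun j => ((e j).out : G), ?_⟩
  ext x
  simp only [Set.mem_iUnion, SetLike.mem_coe]
  constructor
  · intro hx
    refine ⟨e.symm (QuotientAddGroup.mk ⟨x, hx⟩), ?_⟩
    rw [Set.mem_vadd_set_iff_neg_vadd_mem]
    set q : S ⧸ K := QuotientAddGroup.mk ⟨x, hx⟩ with hq
    rw [e.apply_symm_apply]
    have hout : (QuotientAddGroup.mk q.out : S ⧸ K) = q := QuotientAddGroup.out_eq' q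
    have : (⟨x, hx⟩ : S) - q.out ∈ K := by
      rw [← QuotientAddGroup.eq_iff_sub_mem, hout]
    have this2 := AddSubgroup.mem_addSubgroupOf.mp this
    simp only [AddSubgroup.coe_sub, AddSubgroup.mem_inf] at this2
    simp only [vadd_eq_add, SetLike.mem_coe, AddSubgroup.mem_inf]
    constructor
    · simpa [sub_eq_neg_add, add_comm] using this2.1
    · exact S.add_mem (S.neg_mem q.out.2) hx
  · rintro ⟨j, hj⟩
    rw [Set.mem_vadd_set_iff_neg_vadd_mem] at hj
    simp only [vadd_eq_add, SetLike.mem_coe, AddSubgroup.mem_inf] at hj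
    have := S.add_mem ((e j).out.2) hj.2
    simpa using this
end
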